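/- arXiv:1306.0135 — 5 statements merged into one kernel-verified Lean document; each statement's English description precedes it below -/
import Mathlib

section
/- Let ‖·‖ be an absolute norm on ℝⁿ (i.e., ‖x‖ = ‖|x|‖ for all x, where |x| is the componentwise absolute value). Let x ∈ ℝⁿ with x ≥ 0 componentwise, and let y be dual to x with respect to ‖·‖ (i.e., ⟨x,y⟩ = ‖x‖·‖y‖* where ‖·‖* is the dual norm). Then for every index i with xᵢ > 0, we have yᵢ ≥ 0. -/
/-- For an absolute norm on ℝⁿ, if `y` is dual to a nonnegative
vector `x`, then `yᵢ ≥ 0` whenever `xᵢ > 0`. -/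
theorem stmt0 (n : ℕ) (N : (Fin n → ℝ) → ℝ)
    (hN_add : ∀ a b, N (a + b) ≤ N a + N b)
    (hN_smul : ∀ (c : ℝ) a, N (c • a) = |c| * N a)
    (hN_pos : ∀ a, a ≠ 0 → 0 < N a)
    (hN_abs : ∀ a, N (fun i => |a i|) = N a)
    (Ndual : (Fin n → ℝ) → ℝ)
    (hNdual : ∀ b, Ndual b = sSup {r : ℝ | ∃ a, N a ≤ 1 ∧ r = ∑ i, a i * b i})
    (x y : Fin n → ℝ) (hx : ∀ i, 0 ≤ x i)
    (hdual : ∑ i, x i * y i = N x * Ndual y) :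
    ∀ i, 0 < x i → 0 ≤ y i := by
  classical
  -- flipping the sign of one coordinate preserves the norm
  have hflip : ∀ (a : Fin n → ℝ) (j : Fin n),
      N (fun k => if k = j then -a j else a k) = N a := by
    intro a j
    rw [← hN_abs (fun k => if k = j then -a j else a k), ← hN_abs a]
    congr 1; funext k
    by_cases h : k = j <;> simp [h, abs_neg]
  have hsingle : ∀ j : Fin n, 0 < N (Pi.single j 1) := by
    intro j
    apply hN_pos
    intro h
    have := congrFun h j
    simp [Pi.single_eq_same] at this
  have hcoord : ∀ (a : Fin n → ℝ) (j : Fin n),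
      |a j| * N (Pi.single j 1) ≤ N a := by
    intro a j
    have h1 : N (a + (-1 : ℝ) • (fun k => if k = j then -a j else a k)) ≤
        N a + N ((-1 : ℝ) • (fun k => if k = j then -a j else a k)) := hN_add _ _
    rw [hN_smul, hflip] at h1
    have h2 : (a + (-1 : ℝ) • (fun k => if k = j then -a j else a k))
        = (2 * a j) • (Pi.single j 1 : Fin n → ℝ) := by
      funext k
      by_cases h : k = j
      · subst h; simp [Pi.single_eq_same]; ring
      · simp [h, Pi.single_eq_of_ne h]
    rw [h2, hN_smul] at h1
    have h3 : |2 * a j| = 2 * |a j| := by rw [abs_mul]; norm_num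
    rw [h3] at h1; norm_num at h1; linarith
  have hbdd : BddAbove {r : ℝ | ∃ a, N a ≤ 1 ∧ r = ∑ i, a i * y i} := by
    refine ⟨∑ j, |y j| / N (Pi.single j 1), ?_⟩
    rintro r ⟨a, ha, rfl⟩
    apply Finset.sum_le_sum
    intro j _
    have h1 := hcoord a j
    have h2 : |a j| ≤ 1 / N (Pi.single j 1) := by
      rw [le_div_iff₀ (hsingle j)]; linarith
    calc a j * y j ≤ |a j * y j| := le_abs_self _
      _ = |a j| * |y j| := abs_mul _ _
      _ ≤ (1 / N (Pi.single j 1)) * |y j| :=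
          mul_le_mul_of_nonneg_right h2 (abs_nonneg _)
      _ = |y j| / N (Pi.single j 1) := by ring
  intro i hxi
  by_contra hy
  push_neg at hy
  have hxne : x ≠ 0 := by
    intro h
    rw [h] at hxi
    exact lt_irrefl 0 hxi
  have hNx : 0 < N x := hN_pos x hxne
  set x' : Fin n → ℝ := fun k => if k = i then -x i else x k with hx'def
  have hNx' : N x' = N x := hflip x i
  set a : Fin n → ℝ := (N x)⁻¹ • x' with hadef
  have hNa : N a ≤ 1 := by
    rw [hadef, hN_smul, hNx', abs_of_nonneg (inv_nonneg.mpr hNx.le),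
      inv_mul_cancel₀ hNx.ne']
  have hmem : (∑ j, a j * y j) ∈ {r : ℝ | ∃ a, N a ≤ 1 ∧ r = ∑ i, a i * y i} :=
    ⟨a, hNa, rfl⟩
  have hle : (∑ j, a j * y j) ≤ Ndual y := by
    rw [hNdual y]
    exact le_csSup hbdd hmem
  have hsum : ∑ j, a j * y j = (N x)⁻¹ * ∑ j, x' j * y j := by
    rw [Finset.mul_sum]
    apply Finset.sum_congr rfl
    intro j _
    simp [hadef]
    ring
  have hle2 : ∑ j, x' j * y j ≤ ∑ j, x j * y j := by
    rw [hdual]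
    have := mul_le_mul_of_nonneg_left hle hNx.le
    calc ∑ j, x' j * y j = N x * ((N x)⁻¹ * ∑ j, x' j * y j) := by
          field_simp
      _ = N x * ∑ j, a j * y j := by rw [hsum]
      _ ≤ N x * Ndual y := this
  have hdiff : ∑ j, x' j * y j - ∑ j, x j * y j = -2 * x i * y i := by
    rw [← Finset.sum_sub_distrib]
    rw [Finset.sum_eq_single i]
    · simp [hx'def]; ring
    · intro j _ hj
      simp [hx'def, hj]
    · intro h
      exact absurd (Finset.mem_univ i) h
  nlinarith
end

section
/- Let M be a finite set of Metzler matrices. The associated graph G(M) is strongly connected if and only if for all indices i, j ∈ {1,…,n} there exist k ∈ ℕ, matrices A₁,…,A_k ∈ M and times t₁,…,t_k > 0 such that the (i,j) entry of exp(A₁t₁)···exp(A_k t_k) is strictly positive. -/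
/-!
For entrywise nonnegative matrices, `(P * Q) i j > 0` iff `P i k > 0` and `Q k j > 0` for some
`k`, so a product of such matrices has a positive `(i, j)` entry iff there is a path from `i` to
`j` stepping through the supports of the factors in order. A Metzler matrix `A` becomes
nonnegative after adding `c • 1` for large `c`, which only multiplies `exp A` by `Real.exp c`.
Hence `exp (t • A)` is nonnegative, and by its power series its `(i, j)` entry is positive
whenever `A i j > 0`, and only if `j` is reachable from `i` in the graph of `A`.
-/

open NormedSpace Nat Relation

namespace Matrix

variable {ι : Type*}

def IsMetzler (A : Matrix ι ι ℝ) : Prop := ∀ i j, i ≠ j → 0 ≤ A i j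

theorem IsMetzler.smul {A : Matrix ι ι ℝ} (hA : A.IsMetzler) {t : ℝ} (ht : 0 ≤ t) :
    (t • A).IsMetzler :=
  fun i j hij => mul_nonneg ht (hA i j hij)

variable [Fintype ι]

theorem mul_apply_pos_iff {P Q : Matrix ι ι ℝ} (hP : ∀ i j, 0 ≤ P i j) (hQ : ∀ i j, 0 ≤ Q i j)
    {i j : ι} : 0 < (P * Q) i j ↔ ∃ k, 0 < P i k ∧ 0 < Q k j := by
  rw [mul_apply, Finset.sum_pos_iff_of_nonneg fun k _ => mul_nonneg (hP i k) (hQ k j)]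
  refine exists_congr fun k => ⟨fun h => ?_, fun ⟨h₁, h₂⟩ => ⟨Finset.mem_univ k, mul_pos h₁ h₂⟩⟩
  exact (mul_pos_iff.mp h.2).resolve_right fun h' => (hP i k).not_gt h'.1

variable [DecidableEq ι]

section ListProd

theorem list_prod_apply_nonneg {L : List (Matrix ι ι ℝ)} (hL : ∀ P ∈ L, ∀ i j, 0 ≤ P i j)
    (i j : ι) : 0 ≤ L.prod i j := by
  induction L generalizing i with
  | nil => by_cases h : i = j <;> simp [h]
  | cons P L ih =>
    rw [List.prod_cons, mul_apply]
    exact Finset.sum_nonneg fun k _ =>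
      mul_nonneg (hL P List.mem_cons_self i k) (ih (fun Q hQ => hL Q (List.mem_cons_of_mem P hQ)) k)

theorem reflTransGen_of_list_prod_apply_pos {r : ι → ι → Prop} {L : List (Matrix ι ι ℝ)}
    (hL : ∀ P ∈ L, ∀ i j, 0 ≤ P i j) (hr : ∀ P ∈ L, ∀ a b, 0 < P a b → ReflTransGen r a b)
    {i j : ι} (h : 0 < L.prod i j) : ReflTransGen r i j := by
  induction L generalizing i with
  | nil =>
    obtain rfl : i = j := by by_contra hij; simp [one_apply_ne hij] at h
    exact ReflTransGen.refl
  | cons P L ih =>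
    have hL' : ∀ Q ∈ L, ∀ i j, 0 ≤ Q i j := fun Q hQ => hL Q (List.mem_cons_of_mem P hQ)
    rw [List.prod_cons, mul_apply_pos_iff (hL P List.mem_cons_self) (list_prod_apply_nonneg hL')]
      at h
    obtain ⟨k, hik, hkj⟩ := h
    exact (hr P List.mem_cons_self i k hik).trans
      (ih hL' (fun Q hQ => hr Q (List.mem_cons_of_mem P hQ)) hkj)

theorem reflTransGen_of_pow_apply_pos {A : Matrix ι ι ℝ} (hA : ∀ i j, 0 ≤ A i j) {m : ℕ}
    {i j : ι} (h : 0 < (A ^ m) i j) : ReflTransGen (fun a b => a ≠ b ∧ 0 < A a b) i j := by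
  rw [← List.prod_replicate] at h
  refine reflTransGen_of_list_prod_apply_pos (by simpa using fun _ => hA) ?_ h
  simp only [List.mem_replicate]
  rintro P ⟨-, rfl⟩ a b hab
  by_cases h : a = b
  · exact h ▸ ReflTransGen.refl
  · exact ReflTransGen.single ⟨h, hab⟩

theorem exists_list_map_prod_apply_pos {α : Type*} {r : ι → ι → Prop} {T : Set α}
    (f : α → Matrix ι ι ℝ) (hf : ∀ x ∈ T, ∀ i j, 0 ≤ f x i j)
    (hr : ∀ a b, r a b → ∃ x ∈ T, 0 < f x a b) {i j : ι} (h : ReflTransGen r i j) :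
    ∃ l : List α, (∀ x ∈ l, x ∈ T) ∧ 0 < (l.map f).prod i j := by
  induction h with
  | refl => exact ⟨[], by simp, by simp⟩
  | tail _ hbc ih =>
    obtain ⟨l, hlT, hl⟩ := ih
    obtain ⟨x, hxT, hx⟩ := hr _ _ hbc
    refine ⟨l ++ [x], List.forall_mem_append.mpr ⟨hlT, List.forall_mem_singleton.mpr hxT⟩, ?_⟩
    have hl₀ : ∀ i j, 0 ≤ (l.map f).prod i j :=
      list_prod_apply_nonneg (List.forall_mem_map.mpr fun y hy => hf y (hlT y hy))
    rw [List.map_append, List.prod_append, List.map_singleton, List.prod_singleton,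
      mul_apply_pos_iff hl₀ (hf x hxT)]
    exact ⟨_, hl, hx⟩

end ListProd

section Exp

variable {A : Matrix ι ι ℝ}

-- `exp` does not depend on the norm; the operator norm only serves to invoke the series lemma.
theorem hasSum_exp_apply (A : Matrix ι ι ℝ) (i j : ι) :
    HasSum (fun m : ℕ => (m ! : ℝ)⁻¹ * (A ^ m) i j) (exp A i j) :=
  open scoped Matrix.Norms.Operator in
  Pi.hasSum.mp (Pi.hasSum.mp (exp_series_hasSum_exp' (𝕂 := ℝ) A) i) j

theorem exp_add_smul_one_apply (A : Matrix ι ι ℝ) (c : ℝ) (i j : ι) :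
    exp (A + c • 1) i j = Real.exp c * exp A i j := by
  have hc : exp (c • (1 : Matrix ι ι ℝ)) = Real.exp c • 1 := by
    rw [smul_one_eq_diagonal, smul_one_eq_diagonal, exp_diagonal]
    congr 1
    ext
    simp [Real.exp_eq_exp_ℝ]
  rw [exp_add_of_commute _ _ ((Commute.one_right A).smul_right c), hc, mul_smul_comm, mul_one,
    smul_apply, smul_eq_mul]

theorem le_exp_apply_of_nonneg (hA : ∀ i j, 0 ≤ A i j) (m : ℕ) (i j : ι) :
    (m ! : ℝ)⁻¹ * (A ^ m) i j ≤ exp A i j :=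
  le_hasSum (hasSum_exp_apply A i j) m fun k _ =>
    mul_nonneg (by positivity) (pow_apply_nonneg hA k i j)

theorem exp_apply_nonneg_of_nonneg (hA : ∀ i j, 0 ≤ A i j) (i j : ι) : 0 ≤ exp A i j :=
  (hasSum_exp_apply A i j).nonneg fun m => mul_nonneg (by positivity) (pow_apply_nonneg hA m i j)

theorem exists_pow_apply_pos_of_exp_apply_pos {i j : ι} (h : 0 < exp A i j) :
    ∃ m, 0 < (A ^ m) i j := by
  by_contra! h0
  exact h.not_ge <| hasSum_le (fun m => mul_nonpos_of_nonneg_of_nonpos (by positivity) (h0 m))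
    (hasSum_exp_apply A i j) hasSum_zero

end Exp

namespace IsMetzler

variable {A : Matrix ι ι ℝ}

theorem exists_nonneg_add_smul_one (hA : A.IsMetzler) : ∃ c : ℝ, ∀ i j, 0 ≤ (A + c • 1) i j := by
  refine ⟨∑ k, |A k k|, fun i j => ?_⟩
  by_cases hij : i = j
  · subst hij
    have : |A i i| ≤ ∑ k, |A k k| :=
      Finset.single_le_sum (f := fun k => |A k k|) (fun k _ => abs_nonneg _) (Finset.mem_univ i)
    simp only [add_apply, smul_apply, one_apply_eq, smul_eq_mul, mul_one]
    linarith [neg_abs_le (A i i)]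
  · simpa [one_apply_ne hij] using hA i j hij

theorem exp_apply_nonneg (hA : A.IsMetzler) (i j : ι) : 0 ≤ exp A i j := by
  obtain ⟨c, hc⟩ := hA.exists_nonneg_add_smul_one
  have := exp_apply_nonneg_of_nonneg hc i j
  rwa [exp_add_smul_one_apply, mul_nonneg_iff_of_pos_left (Real.exp_pos c)] at this

theorem exp_apply_pos (hA : A.IsMetzler) {i j : ι} (hij : i ≠ j) (h : 0 < A i j) :
    0 < exp A i j := by
  obtain ⟨c, hc⟩ := hA.exists_nonneg_add_smul_one
  have hle : A i j ≤ exp (A + c • 1) i j := by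
    simpa [one_apply_ne hij] using le_exp_apply_of_nonneg hc 1 i j
  rw [exp_add_smul_one_apply] at hle
  exact (mul_pos_iff_of_pos_left (Real.exp_pos c)).mp (h.trans_le hle)

theorem reflTransGen_of_exp_apply_pos (hA : A.IsMetzler) {i j : ι} (h : 0 < exp A i j) :
    ReflTransGen (fun a b => a ≠ b ∧ 0 < A a b) i j := by
  obtain ⟨c, hc⟩ := hA.exists_nonneg_add_smul_one
  have hc' : 0 < exp (A + c • 1) i j := by
    rw [exp_add_smul_one_apply]
    exact mul_pos (Real.exp_pos c) h
  obtain ⟨m, hm⟩ := exists_pow_apply_pos_of_exp_apply_pos hc'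
  refine ReflTransGen.mono ?_ i j (reflTransGen_of_pow_apply_pos hc hm)
  rintro a b ⟨hab, hpos⟩
  exact ⟨hab, by simpa [one_apply_ne hab] using hpos⟩

end IsMetzler

end Matrix

open Matrix

/-- `G(M)` is strongly connected iff for all `i j` there are
matrices `A₁,…,A_k ∈ M` and times `t₁,…,t_k > 0` with
`(exp(A₁t₁)⋯exp(A_k t_k))_{ij} > 0`. -/
theorem stmt6 (n : ℕ) (M : Finset (Matrix (Fin n) (Fin n) ℝ))
    (hMetzler : ∀ A ∈ M, ∀ i j, i ≠ j → 0 ≤ A i j) :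
    (∀ i j : Fin n, Relation.ReflTransGen
        (fun a b : Fin n => a ≠ b ∧ ∃ A ∈ M, 0 < A a b) i j) ↔
      (∀ i j : Fin n, ∃ l : List (Matrix (Fin n) (Fin n) ℝ × ℝ),
        (∀ p ∈ l, p.1 ∈ M ∧ 0 < p.2) ∧
        0 < (l.map (fun p => NormedSpace.exp (p.2 • p.1))).prod i j) := by
  have hM : ∀ p : Matrix (Fin n) (Fin n) ℝ × ℝ, p.1 ∈ M ∧ 0 < p.2 → (p.2 • p.1).IsMetzler :=
    fun p hp => IsMetzler.smul (hMetzler p.1 hp.1) hp.2.le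
  constructor
  · intro h i j
    refine exists_list_map_prod_apply_pos
      (T := {p : Matrix (Fin n) (Fin n) ℝ × ℝ | p.1 ∈ M ∧ 0 < p.2}) _
      (fun p hp => (hM p hp).exp_apply_nonneg) ?_ (h i j)
    rintro a b ⟨hab, A, hA, hpos⟩
    exact ⟨(A, 1), ⟨hA, one_pos⟩, (hM (A, 1) ⟨hA, one_pos⟩).exp_apply_pos hab (by simpa using hpos)⟩
  · intro h i j
    obtain ⟨l, hl, hpos⟩ := h i j
    refine reflTransGen_of_list_prod_apply_pos
      (List.forall_mem_map.mpr fun p hp => (hM p (hl p hp)).exp_apply_nonneg) ?_ hpos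
    simp only [List.forall_mem_map]
    intro p hp a b hab
    refine ReflTransGen.mono ?_ a b ((hM p (hl p hp)).reflTransGen_of_exp_apply_pos hab)
    rintro x y ⟨hxy, hpos⟩
    rw [Matrix.smul_apply, smul_eq_mul, mul_pos_iff_of_pos_left (hl p hp).2] at hpos
    exact ⟨hxy, p.1, (hl p hp).1, hpos⟩
end

section
/- A Metzler matrix A ∈ ℝⁿˣⁿ is Hurwitz (all eigenvalues have negative real part) if and only if A is invertible and A⁻¹ is entrywise nonpositive. -/
/-!
For small `t > 0` the matrix `P = 1 + t • A` is entrywise nonnegative, and its eigenvalues are the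
`1 + t μ` with `μ` an eigenvalue of `A`; `Re μ < 0` exactly when `‖1 + t μ‖ < 1` for all small
`t > 0`. By Gelfand's formula the spectrum of `P` lies in the open unit disc iff `P ^ k → 0`.
For a nonnegative `P` this is equivalent to `1 - P = -t • A` being invertible with nonnegative
inverse: the Neumann sums `∑_{k<m} P ^ k = (1 - P ^ m) (1 - P)⁻¹` increase to `(1 - P)⁻¹` when
`P ^ k → 0`, and conversely are bounded by `(1 - P)⁻¹`, so their terms tend to zero.
-/

open Filter Topology Finset

section BanachAlgebra

variable {A : Type*} [NormedRing A] [NormedAlgebra ℂ A] [CompleteSpace A]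

theorem tendsto_pow_nhds_zero_of_spectralRadius_lt_one {a : A} (h : spectralRadius ℂ a < 1) :
    Tendsto (a ^ ·) atTop (𝓝 0) := by
  obtain ⟨r, hρr, hr1⟩ := ENNReal.lt_iff_exists_nnreal_btwn.mp h
  have hpow : ∀ᶠ k : ℕ in atTop, ‖a ^ k‖₊ ≤ r ^ k := by
    filter_upwards [(spectrum.gelfand_formula a).eventually_lt_const hρr,
      eventually_ne_atTop 0] with k hk hk0
    rw [one_div, ENNReal.rpow_inv_lt_iff (by positivity), ENNReal.rpow_natCast] at hk
    exact_mod_cast hk.le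
  refine squeeze_zero_norm' ?_ (tendsto_pow_atTop_nhds_zero_of_lt_one r.coe_nonneg
    (by exact_mod_cast hr1))
  filter_upwards [hpow] with k hk
  exact_mod_cast hk

theorem norm_lt_one_of_tendsto_pow_nhds_zero {a : A} (h : Tendsto (a ^ ·) atTop (𝓝 0))
    {z : ℂ} (hz : z ∈ spectrum ℂ a) : ‖z‖ < 1 := by
  have hbound : ∀ k : ℕ, ‖z‖ ^ k ≤ ‖a ^ k‖ * ‖(1 : A)‖ := fun k => by
    simpa using spectrum.subset_closedBall_norm_mul (a ^ k) (spectrum.pow_mem_pow a k hz)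
  have : Tendsto (‖z‖ ^ ·) atTop (𝓝 0) :=
    squeeze_zero (fun _ => by positivity) hbound (by simpa using h.norm.mul_const ‖(1 : A)‖)
  simpa using this

theorem tendsto_pow_nhds_zero_iff_forall_norm_lt_one (a : A) :
    Tendsto (a ^ ·) atTop (𝓝 0) ↔ ∀ z ∈ spectrum ℂ a, ‖z‖ < 1 := by
  refine ⟨fun h z hz => norm_lt_one_of_tendsto_pow_nhds_zero h hz, fun h => ?_⟩
  nontriviality A
  refine tendsto_pow_nhds_zero_of_spectralRadius_lt_one
    (spectrum.spectralRadius_lt_of_forall_lt a fun z hz => ?_)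
  exact_mod_cast h z hz

end BanachAlgebra

theorem spectrum_one_add_smul {R A : Type*} [Field R] [Ring A] [Algebra R A] (a : A) {t : R}
    (ht : t ≠ 0) : spectrum R (1 + t • a) = (1 + t * ·) '' spectrum R a := by
  have hsmul := spectrum.unit_smul_eq_smul a (Units.mk0 t ht)
  rw [Units.smul_def, Units.val_mk0] at hsmul
  rw [← map_one (algebraMap R A), ← spectrum.singleton_add_eq, hsmul, Set.singleton_add,
    ← Set.image_smul, Set.image_image]
  rfl

namespace Complex

theorem norm_one_add_mul_lt_one_iff {z : ℂ} {t : ℝ} (ht : 0 < t) :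
    ‖1 + t * z‖ < 1 ↔ 2 * z.re + t * ‖z‖ ^ 2 < 0 := by
  have hsq : ‖1 + t * z‖ ^ 2 = 1 + t * (2 * z.re + t * ‖z‖ ^ 2) := by
    simp only [Complex.sq_norm, normSq_apply, add_re, add_im, mul_re, mul_im, ofReal_re,
      ofReal_im, one_re, one_im]
    ring
  rw [← sq_lt_one_iff₀ (norm_nonneg _), hsq, add_lt_iff_neg_left]
  exact ⟨fun h => neg_of_mul_neg_right h ht.le, mul_neg_of_pos_of_neg ht⟩

theorem re_neg_iff_eventually_norm_one_add_mul_lt_one (z : ℂ) :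
    z.re < 0 ↔ ∀ᶠ t : ℝ in 𝓝[>] 0, ‖1 + t * z‖ < 1 := by
  constructor
  · intro hz
    have hlim : Tendsto (fun t : ℝ => 2 * z.re + t * ‖z‖ ^ 2) (𝓝 0) (𝓝 (2 * z.re)) := by
      simpa using tendsto_const_nhds.add ((tendsto_id (x := 𝓝 (0 : ℝ))).mul_const (‖z‖ ^ 2))
    filter_upwards [self_mem_nhdsWithin, (hlim.eventually_lt_const
      (show 2 * z.re < 0 by linarith)).filter_mono nhdsWithin_le_nhds] with t ht hlt
    exact (norm_one_add_mul_lt_one_iff ht).mpr hlt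
  · intro h
    obtain ⟨t, hlt, ht⟩ := (h.and self_mem_nhdsWithin).exists
    have := (norm_one_add_mul_lt_one_iff ht).mp hlt
    nlinarith [sq_nonneg ‖z‖]

end Complex

namespace Matrix

variable {ι : Type*} [DecidableEq ι]

theorem map_ofReal_one_add_smul (A : Matrix ι ι ℝ) (t : ℝ) :
    (1 + t • A).map ((↑) : ℝ → ℂ) = 1 + (t : ℂ) • A.map (↑) := by
  ext i j
  rcases eq_or_ne i j with rfl | hij <;> simp [one_apply_ne, *]

variable [Fintype ι]

theorem tendsto_pow_map_ofReal_iff (M : Matrix ι ι ℝ) :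
    Tendsto (fun k => M.map ((↑) : ℝ → ℂ) ^ k) atTop (𝓝 0) ↔ Tendsto (M ^ ·) atTop (𝓝 0) := by
  have hpow : ∀ k : ℕ, M.map ((↑) : ℝ → ℂ) ^ k = (M ^ k).map (↑) := fun k =>
    (map_pow (Complex.ofRealHom.mapMatrix (m := ι)) M k).symm
  simp_rw [hpow]
  constructor
  · intro h
    have := ((continuous_id.matrix_map Complex.continuous_re).tendsto 0).comp h
    simpa [Function.comp_def, Matrix.map_map] using this
  · intro h
    have := ((continuous_id.matrix_map Complex.continuous_ofReal).tendsto 0).comp h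
    simpa [Function.comp_def] using this

section

-- The topology of this norm is the entrywise one, in which the limits here are taken.
attribute [local instance] Matrix.linftyOpNormedRing Matrix.linftyOpNormedAlgebra

theorem tendsto_pow_nhds_zero_iff_forall_mem_spectrum_map_ofReal (M : Matrix ι ι ℝ) :
    Tendsto (M ^ ·) atTop (𝓝 0) ↔ ∀ z ∈ spectrum ℂ (M.map ((↑) : ℝ → ℂ)), ‖z‖ < 1 := by
  rw [← tendsto_pow_map_ofReal_iff]
  exact tendsto_pow_nhds_zero_iff_forall_norm_lt_one _

end

theorem isUnit_one_sub_of_tendsto_pow {M : Matrix ι ι ℝ} (h : Tendsto (M ^ ·) atTop (𝓝 0)) :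
    IsUnit (1 - M) := by
  have hdet : Tendsto (fun m => (1 - M ^ m).det) atTop (𝓝 1) := by
    have := (continuous_id.matrix_det.tendsto (1 - 0)).comp (tendsto_const_nhds.sub h)
    simpa [Function.comp_def] using this
  obtain ⟨m, hm⟩ := (hdet.eventually_ne one_ne_zero).exists
  rw [← mul_neg_geom_sum, det_mul] at hm
  rw [isUnit_iff_isUnit_det, isUnit_iff_ne_zero]
  exact left_ne_zero_of_mul hm

theorem tendsto_pow_nhds_zero_iff_of_nonneg {M : Matrix ι ι ℝ} (hM : ∀ i j, 0 ≤ M i j) :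
    Tendsto (M ^ ·) atTop (𝓝 0) ↔ IsUnit (1 - M) ∧ ∀ i j, 0 ≤ (1 - M)⁻¹ i j := by
  constructor
  · intro h
    have hunit := isUnit_one_sub_of_tendsto_pow h
    have hdet := (isUnit_iff_isUnit_det _).mp hunit
    have hlim : Tendsto (fun m => ∑ k ∈ range m, M ^ k) atTop (𝓝 (1 - M)⁻¹) := by
      have hpartial : ∀ m, ∑ k ∈ range m, M ^ k = (1 - M)⁻¹ * (1 - M ^ m) := fun m => by
        rw [← mul_neg_geom_sum, ← mul_assoc, nonsing_inv_mul _ hdet, one_mul]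
      simpa [hpartial] using ((tendsto_const_nhds (x := 1)).sub h).const_mul (1 - M)⁻¹
    refine ⟨hunit, fun i j => ge_of_tendsto' ((hlim.apply_nhds i).apply_nhds j) fun m => ?_⟩
    rw [sum_apply]
    exact sum_nonneg fun k _ => pow_apply_nonneg hM k i j
  · rintro ⟨hunit, hinv⟩
    have hdet := (isUnit_iff_isUnit_det _).mp hunit
    have hbound : ∀ m i j, ∑ k ∈ range m, (M ^ k) i j ≤ (1 - M)⁻¹ i j := fun m i j => by
      have hpartial : ∑ k ∈ range m, M ^ k = (1 - M)⁻¹ - M ^ m * (1 - M)⁻¹ := by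
        rw [← one_sub_mul, ← geom_sum_mul_neg, mul_assoc, mul_nonsing_inv _ hdet, mul_one]
      rw [← sum_apply, hpartial, sub_apply, sub_le_self_iff]
      exact sum_nonneg fun k _ => mul_nonneg (pow_apply_nonneg hM m i k) (hinv k j)
    refine tendsto_pi_nhds.mpr fun i => tendsto_pi_nhds.mpr fun j => ?_
    exact (summable_of_sum_range_le (fun k => pow_apply_nonneg hM k i j)
      (hbound · i j)).tendsto_atTop_zero

theorem eventually_one_add_smul_nonneg {A : Matrix ι ι ℝ} (hA : ∀ i j, i ≠ j → 0 ≤ A i j) :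
    ∀ᶠ t : ℝ in 𝓝[>] 0, ∀ i j, 0 ≤ (1 + t • A) i j := by
  have hdiag : ∀ i, ∀ᶠ t : ℝ in 𝓝[>] 0, 0 ≤ 1 + t * A i i := fun i => by
    have hlim : Tendsto (fun t : ℝ => 1 + t * A i i) (𝓝 0) (𝓝 1) := by
      simpa using tendsto_const_nhds.add ((tendsto_id (x := 𝓝 (0 : ℝ))).mul_const (A i i))
    exact ((hlim.eventually_const_le zero_lt_one).filter_mono nhdsWithin_le_nhds)
  filter_upwards [self_mem_nhdsWithin, eventually_all.mpr hdiag] with t ht hdiag i j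
  rcases eq_or_ne i j with rfl | hij
  · simpa using hdiag i
  · simpa [one_apply_ne hij] using mul_nonneg ht.le (hA i j hij)

theorem isUnit_neg_smul_and_inv_nonneg_iff {A : Matrix ι ι ℝ} {t : ℝ} (ht : 0 < t) :
    (IsUnit (-(t • A)) ∧ ∀ i j, 0 ≤ (-(t • A))⁻¹ i j) ↔ IsUnit A ∧ ∀ i j, A⁻¹ i j ≤ 0 := by
  let u : ℝˣ := Units.mk0 (-t) (by linarith)
  have hu : -(t • A) = u • A := by rw [Units.smul_def, Units.val_mk0, neg_smul]
  rw [hu, isUnit_smul_iff]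
  refine and_congr_right fun hA => forall₂_congr fun i j => ?_
  have hinv := inv_smul' A u ((isUnit_iff_isUnit_det A).mp hA)
  rw [hinv, smul_apply, Units.smul_def, Units.val_inv_eq_inv_val, Units.val_mk0, smul_eq_mul,
    inv_neg, neg_mul, neg_nonneg]
  exact ⟨fun h => nonpos_of_mul_nonpos_right h (by positivity),
    fun h => mul_nonpos_of_nonneg_of_nonpos (by positivity) h⟩

end Matrix

/-- A Metzler matrix is Hurwitz iff it is invertible with
entrywise nonpositive inverse. -/
theorem stmt7 (n : ℕ) (A : Matrix (Fin n) (Fin n) ℝ)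
    (hMetzler : ∀ i j, i ≠ j → 0 ≤ A i j) :
    (∀ μ ∈ spectrum ℂ (A.map (Complex.ofReal)), μ.re < 0) ↔
      (IsUnit A ∧ ∀ i j, A⁻¹ i j ≤ 0) := by
  have hshift : ∀ᶠ t : ℝ in 𝓝[>] 0, (∀ μ ∈ spectrum ℂ (A.map ((↑) : ℝ → ℂ)), ‖1 + t * μ‖ < 1) ↔
      (IsUnit A ∧ ∀ i j, A⁻¹ i j ≤ 0) := by
    filter_upwards [self_mem_nhdsWithin, Matrix.eventually_one_add_smul_nonneg hMetzler] with t ht hP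
    rw [← Matrix.isUnit_neg_smul_and_inv_nonneg_iff ht, ← sub_add_cancel_left 1 (t • A),
      ← Matrix.tendsto_pow_nhds_zero_iff_of_nonneg hP,
      Matrix.tendsto_pow_nhds_zero_iff_forall_mem_spectrum_map_ofReal,
      Matrix.map_ofReal_one_add_smul,
      spectrum_one_add_smul _ (Complex.ofReal_ne_zero.mpr ht.ne'), Set.forall_mem_image]
  calc _ ↔ ∀ᶠ t : ℝ in 𝓝[>] 0, ∀ μ ∈ spectrum ℂ (A.map ((↑) : ℝ → ℂ)), ‖1 + t * μ‖ < 1 := by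
        simp_rw [Complex.re_neg_iff_eventually_norm_one_add_mul_lt_one]
        exact (eventually_all_finite (Matrix.finite_spectrum _)).symm
    _ ↔ _ := eventually_congr hshift
    _ ↔ _ := eventually_const
end

section
/- Let σ: ℝ₊ → {1,…,m} be measurable, and for each j let f_j(x) = (−D_j + B_j − diag(x)B_j)x with D_j diagonal positive and B_j ≥ 0. Let φ(t; x⁰) be the solution of the switched SIS system ẋ = f_{σ(t)}(x), x(0) = x⁰ ∈ ℝⁿ₊, and let Φ_σ(t,0) be the evolution operator of the linearisation ẋ = (−D_{σ(t)} + B_{σ(t)})x. Then for any 0 ≤ x⁰ ≤ y⁰ and all t ≥ 0, φ(t; x⁰) ≤ Φ_σ(t,0) y⁰ componentwise. -/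
/-!
Everything rests on an invariance principle for the nonnegative orthant: if, whenever the most
negative coordinate of `w t` equals `-g` with `0 ≤ g ≤ 1`, that coordinate has derivative
`≥ -C g`, then `w` stays nonnegative. This follows from Grönwall's inequality applied to the size
of the negative part of `w`, truncated at `1`.

Applied to `φ` it shows that the SIS solution stays in the orthant. On the orthant the SIS field
is dominated by its linearisation, `f_j(x) ≤ (-D_j + B_j) x`, so `w = Φ y⁰ - φ` satisfies
`w' ≥ (-D + B) w` with a Metzler matrix and `w 0 = y⁰ - x⁰ ≥ 0`; the principle applies again.
-/

open Filter Set Matrix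
open scoped Topology NNReal

theorem eventually_max_neg_le_of_hasDerivAt {f : ℝ → ℝ} {f' x g ρ : ℝ} (hf : HasDerivAt f f' x)
    (hg : 0 ≤ g) (hρ : 0 ≤ ρ) (hfx : -f x ≤ g) (hf' : f x = -g → -ρ < f') :
    ∀ᶠ z in 𝓝[>] x, max (-f z) 0 ≤ g + (z - x) * ρ := by
  have hbound : ∀ᶠ z in 𝓝[>] x, -f z ≤ g + (z - x) * ρ := by
    rcases hfx.lt_or_eq with hlt | heq
    · filter_upwards [(hf.continuousAt.neg.eventually (gt_mem_nhds hlt)).filter_mono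
        nhdsWithin_le_nhds, self_mem_nhdsWithin] with z (hz : -f z < g) (hxz : x < z)
      nlinarith
    · filter_upwards [hf.neg.hasDerivWithinAt.limsup_slope_le' (lt_irrefl x)
        (neg_lt.1 (hf' (by linarith))), self_mem_nhdsWithin] with z hz (hxz : x < z)
      rw [slope_def_field, div_lt_iff₀ (sub_pos.2 hxz)] at hz
      simp only [Pi.neg_apply] at hz
      nlinarith
  filter_upwards [hbound, self_mem_nhdsWithin] with z hz (hxz : x < z)
  exact max_le hz (by nlinarith)

theorem HasDerivAt.mulVec_const {ι κ : Type*} [Fintype κ] {Φ : ℝ → ι → κ → ℝ}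
    {Φ' : ι → κ → ℝ} {t : ℝ} (h : HasDerivAt Φ Φ' t) (y : κ → ℝ) :
    HasDerivAt (fun s => Φ s *ᵥ y) (Φ' *ᵥ y) t :=
  hasDerivAt_pi.2 fun i =>
    HasDerivAt.fun_sum fun k _ => (hasDerivAt_pi.1 (hasDerivAt_pi.1 h i) k).mul_const (y k)

section Invariance

variable {ι : Type*} [Fintype ι]

/-- The truncation lets the quasimonotonicity hypothesis below be required only near the
orthant, which is all that the quadratic SIS term allows. -/
def truncNegPartNorm (v : ι → ℝ) : ℝ := min ‖fun i => max (-v i) 0‖ 1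

lemma truncNegPartNorm_nonneg (v : ι → ℝ) : 0 ≤ truncNegPartNorm v :=
  le_min (norm_nonneg _) zero_le_one

lemma truncNegPartNorm_le_one (v : ι → ℝ) : truncNegPartNorm v ≤ 1 :=
  min_le_right _ _

lemma neg_apply_le_norm_negPart (v : ι → ℝ) (i : ι) : -v i ≤ ‖fun i => max (-v i) 0‖ :=
  ((le_max_left _ _).trans (le_abs_self _)).trans (norm_le_pi_norm (fun i => max (-v i) 0) i)

lemma truncNegPartNorm_nonpos_iff (v : ι → ℝ) : truncNegPartNorm v ≤ 0 ↔ 0 ≤ v := by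
  refine ⟨fun h i => show 0 ≤ v i from ?_, fun h => min_le_of_left_le (norm_le_zero_iff.2 ?_)⟩
  · have : ‖fun i => max (-v i) 0‖ ≤ 0 := (min_le_iff.1 h).resolve_right (by norm_num)
    linarith [neg_apply_le_norm_negPart v i]
  · exact funext fun i => max_eq_right (neg_nonpos.2 (h i))

lemma continuousAt_truncNegPartNorm {w : ℝ → ι → ℝ} {t : ℝ} (hw : ContinuousAt w t) :
    ContinuousAt (fun s => truncNegPartNorm (w s)) t := by
  have hwi : ∀ i, ContinuousAt (fun s => w s i) t := fun i =>
    (continuous_apply i).continuousAt.comp hw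
  have hneg : ContinuousAt (fun s i => max (-w s i) 0) t := continuousAt_pi.2 (by fun_prop)
  unfold truncNegPartNorm
  fun_prop

lemma eventually_slope_truncNegPartNorm_lt {w w' : ℝ → ι → ℝ} {C : ℝ≥0} {x r : ℝ}
    (hw : HasDerivAt w (w' x) x)
    (hC : ∀ i (g : ℝ), 0 ≤ g → g ≤ 1 → w x i = -g → (∀ l, -g ≤ w x l) → -(C * g) ≤ w' x i)
    (hr : C * truncNegPartNorm (w x) < r) :
    ∀ᶠ z in 𝓝[>] x, (z - x)⁻¹ * (truncNegPartNorm (w z) - truncNegPartNorm (w x)) < r := by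
  obtain ⟨ρ, hρ, hρr⟩ := exists_between hr
  have hρ0 : 0 ≤ ρ := (mul_nonneg C.2 (truncNegPartNorm_nonneg _)).trans hρ.le
  suffices ∀ᶠ z in 𝓝[>] x, truncNegPartNorm (w z) ≤ truncNegPartNorm (w x) + (z - x) * ρ by
    filter_upwards [this, self_mem_nhdsWithin] with z hz (hxz : x < z)
    rw [inv_mul_lt_iff₀ (sub_pos.2 hxz)]
    nlinarith
  rcases le_or_gt 1 ‖fun i => max (-w x i) 0‖ with h1 | h1
  · filter_upwards [self_mem_nhdsWithin] with z (hxz : x < z)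
    rw [show truncNegPartNorm (w x) = 1 from min_eq_right h1]
    nlinarith [truncNegPartNorm_le_one (w z)]
  set g := ‖fun i => max (-w x i) 0‖
  have hgx : truncNegPartNorm (w x) = g := min_eq_left h1.le
  have hcomp : ∀ i, ∀ᶠ z in 𝓝[>] x, max (-w z i) 0 ≤ g + (z - x) * ρ := fun i =>
    eventually_max_neg_le_of_hasDerivAt (hasDerivAt_pi.1 hw i) (norm_nonneg _) hρ0
      (neg_apply_le_norm_negPart _ i) fun hi => by
        have := hC i g (norm_nonneg _) h1.le hi fun l => neg_le.1 (neg_apply_le_norm_negPart _ l)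
        rw [hgx] at hρ
        linarith
  filter_upwards [eventually_all.2 hcomp, self_mem_nhdsWithin] with z hz (hxz : x < z)
  rw [hgx]
  have hbound : 0 ≤ g + (z - x) * ρ := by nlinarith [norm_nonneg (fun i => max (-w x i) 0)]
  refine (min_le_left _ _).trans ((pi_norm_le_iff_of_nonneg hbound).2 fun i => ?_)
  rw [Real.norm_of_nonneg (le_max_right _ _)]
  exact hz i

theorem nonneg_of_hasDerivAt_of_quasimonotone {w w' : ℝ → ι → ℝ} (C : ℝ≥0)
    (hw : ∀ t, 0 ≤ t → HasDerivAt w (w' t) t) (h0 : 0 ≤ w 0)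
    (hC : ∀ t, 0 ≤ t → ∀ i (g : ℝ), 0 ≤ g → g ≤ 1 → w t i = -g → (∀ l, -g ≤ w t l) →
      -(C * g) ≤ w' t i) :
    ∀ t, 0 ≤ t → 0 ≤ w t := by
  intro T hT
  have hle := le_gronwallBound_of_liminf_deriv_right_le
    (fun t ht => (continuousAt_truncNegPartNorm (hw t ht.1).continuousAt).continuousWithinAt)
    (fun x hx r hr => (eventually_slope_truncNegPartNorm_lt (hw x hx.1) (hC x hx.1) hr).frequently)
    ((truncNegPartNorm_nonpos_iff _).2 h0) (fun x _ => (add_zero _).ge) T ⟨hT, le_rfl⟩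
  rw [gronwallBound_ε0_δ0] at hle
  exact (truncNegPartNorm_nonpos_iff _).1 hle

end Invariance

section SIS

variable {ι : Type*} [Fintype ι]

lemma mulVec_nonneg_of_nonneg {B : Matrix ι ι ℝ} (hB : ∀ i k, 0 ≤ B i k) {x : ι → ℝ}
    (hx : 0 ≤ x) : 0 ≤ B *ᵥ x :=
  fun i => Finset.sum_nonneg fun k _ => mul_nonneg (hB i k) (hx k)

lemma neg_mul_sum_le_mulVec {B : Matrix ι ι ℝ} (hB : ∀ i k, 0 ≤ B i k) {x : ι → ℝ} {g : ℝ}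
    (hx : ∀ k, -g ≤ x k) (i : ι) : -(g * ∑ k, B i k) ≤ (B *ᵥ x) i := by
  rw [Finset.mul_sum, ← Finset.sum_neg_distrib]
  exact Finset.sum_le_sum fun k _ => by nlinarith [hB i k, hx k]

variable [DecidableEq ι] {d : ι → ℝ} {B : Matrix ι ι ℝ}

def sisField (d : ι → ℝ) (B : Matrix ι ι ℝ) (x : ι → ℝ) : ι → ℝ :=
  fun i => -(d i) * x i + (1 - x i) * ∑ k, B i k * x k

lemma sisField_eq (d : ι → ℝ) (B : Matrix ι ι ℝ) (x : ι → ℝ) :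
    sisField d B x = (-(diagonal d) + B) *ᵥ x - x * (B *ᵥ x) := by
  ext i
  simp only [sisField, add_mulVec, neg_mulVec, Pi.sub_apply, Pi.add_apply, Pi.neg_apply,
    mulVec_diagonal, Pi.mul_apply]
  simp only [mulVec, dotProduct]
  ring

lemma sisField_le_mulVec (hB : ∀ i k, 0 ≤ B i k) {x : ι → ℝ} (hx : 0 ≤ x) :
    sisField d B x ≤ (-(diagonal d) + B) *ᵥ x := by
  rw [sisField_eq]
  exact sub_le_self _ (mul_nonneg hx (mulVec_nonneg_of_nonneg hB hx))

lemma neg_mul_sum_le_metzler_mulVec (hd : 0 ≤ d) (hB : ∀ i k, 0 ≤ B i k) {x : ι → ℝ} {g : ℝ}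
    {i : ι} (hg : 0 ≤ g) (hxi : x i = -g) (hx : ∀ k, -g ≤ x k) :
    -(g * ∑ k, B i k) ≤ ((-(diagonal d) + B) *ᵥ x) i := by
  rw [add_mulVec, neg_mulVec, Pi.add_apply, Pi.neg_apply, mulVec_diagonal, hxi]
  nlinarith [mul_nonneg (show 0 ≤ d i from hd i) hg, neg_mul_sum_le_mulVec hB hx i]

lemma neg_two_mul_sum_le_sisField (hd : 0 ≤ d) (hB : ∀ i k, 0 ≤ B i k) {x : ι → ℝ} {g : ℝ}
    {i : ι} (hg : 0 ≤ g) (hg1 : g ≤ 1) (hxi : x i = -g) (hx : ∀ k, -g ≤ x k) :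
    -(2 * g * ∑ k, B i k) ≤ sisField d B x i := by
  have hrow : 0 ≤ ∑ k, B i k := Finset.sum_nonneg fun k _ => hB i k
  rw [sisField_eq, Pi.sub_apply, Pi.mul_apply, hxi]
  nlinarith [neg_mul_sum_le_metzler_mulVec hd hB hg hxi hx, neg_mul_sum_le_mulVec hB hx i,
    mul_nonneg (mul_nonneg hg (sub_nonneg.2 hg1)) hrow]

end SIS

theorem stmt12_general (n m : ℕ) (σ : ℝ → Fin m)
    (d : Fin m → Fin n → ℝ) (hd : ∀ j i, 0 < d j i)
    (B : Fin m → Matrix (Fin n) (Fin n) ℝ) (hB : ∀ j i k, 0 ≤ B j i k)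
    (x0 y0 : Fin n → ℝ) (hx0 : ∀ i, 0 ≤ x0 i) (hle : ∀ i, x0 i ≤ y0 i)
    (φ : ℝ → Fin n → ℝ) (hφ0 : φ 0 = x0)
    (hφ : ∀ t : ℝ, 0 ≤ t → HasDerivAt φ
      (fun i => -(d (σ t) i) * φ t i
        + (1 - φ t i) * ∑ k, B (σ t) i k * φ t k) t)
    (Φ : ℝ → Fin n → Fin n → ℝ) (hΦ0 : Φ 0 = fun i k => if i = k then 1 else 0)
    (hΦ : ∀ t : ℝ, 0 ≤ t → HasDerivAt Φ
      (fun i k => ∑ l, ((-(Matrix.diagonal (d (σ t))) + B (σ t)) i l) * Φ t l k) t) :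
    ∀ t : ℝ, 0 ≤ t → ∀ i, φ t i ≤ ∑ k, Φ t i k * y0 k := by
  have hd0 : ∀ j, 0 ≤ d j := fun j i => (hd j i).le
  obtain ⟨β, hβ⟩ : ∃ β : ℝ≥0, ∀ j i, ∑ k, B j i k ≤ β := by
    obtain ⟨β, hβ⟩ := Finite.exists_le fun p : Fin m × Fin n => (∑ k, B p.1 p.2 k).toNNReal
    exact ⟨β, fun j i => (Real.le_coe_toNNReal _).trans (NNReal.coe_le_coe.2 (hβ (j, i)))⟩
  have hφ_nonneg : ∀ t, 0 ≤ t → 0 ≤ φ t :=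
    nonneg_of_hasDerivAt_of_quasimonotone (2 * β) hφ (hφ0 ▸ hx0)
      fun t _ i g hg hg1 hi hφg => calc
        -(↑(2 * β) * g) ≤ -(2 * g * ∑ k, B (σ t) i k) := by push_cast; nlinarith [hβ (σ t) i]
        _ ≤ sisField (d (σ t)) (B (σ t)) (φ t) i :=
          neg_two_mul_sum_le_sisField (hd0 _) (hB _) hg hg1 hi hφg
  have hw : ∀ t, 0 ≤ t → HasDerivAt (fun s => Φ s *ᵥ y0 - φ s)
      ((-(diagonal (d (σ t))) + B (σ t)) *ᵥ (Φ t *ᵥ y0) - sisField (d (σ t)) (B (σ t)) (φ t)) t :=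
    fun t ht => (((hΦ t ht).mulVec_const y0).congr_deriv
      (mulVec_mulVec y0 (-(diagonal (d (σ t))) + B (σ t)) (Φ t)).symm).sub (hφ t ht)
  have hw0 : 0 ≤ Φ 0 *ᵥ y0 - φ 0 := fun i => by
    simp [hΦ0, hφ0, mulVec, dotProduct, hle i]
  have hw_nonneg := nonneg_of_hasDerivAt_of_quasimonotone β hw hw0
    fun t ht i g hg _ hi hwg => calc
      -(β * g) ≤ -(g * ∑ k, B (σ t) i k) := by nlinarith [hβ (σ t) i]
      _ ≤ ((-(diagonal (d (σ t))) + B (σ t)) *ᵥ (Φ t *ᵥ y0 - φ t)) i :=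
        neg_mul_sum_le_metzler_mulVec (hd0 _) (hB _) hg hi hwg
      _ ≤ _ := by
        rw [mulVec_sub, Pi.sub_apply, Pi.sub_apply]
        linarith [sisField_le_mulVec (d := d (σ t)) (hB (σ t)) (hφ_nonneg t ht) i]
  intro t ht i
  exact sub_nonneg.1 (hw_nonneg t ht i)

/-- The solution of the switched SIS system is dominated by the
evolution operator of its linearisation applied to any larger initial value. -/
theorem stmt12 (n m : ℕ) (σ : ℝ → Fin m) (hσ : Measurable σ)
    (d : Fin m → Fin n → ℝ) (hd : ∀ j i, 0 < d j i)
    (B : Fin m → Matrix (Fin n) (Fin n) ℝ) (hB : ∀ j i k, 0 ≤ B j i k)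
    (x0 y0 : Fin n → ℝ) (hx0 : ∀ i, 0 ≤ x0 i) (hle : ∀ i, x0 i ≤ y0 i)
    (φ : ℝ → Fin n → ℝ) (hφ0 : φ 0 = x0)
    (hφ : ∀ t : ℝ, 0 ≤ t → HasDerivAt φ
      (fun i => -(d (σ t) i) * φ t i
        + (1 - φ t i) * ∑ k, B (σ t) i k * φ t k) t)
    (Φ : ℝ → Fin n → Fin n → ℝ) (hΦ0 : Φ 0 = fun i k => if i = k then 1 else 0)
    (hΦ : ∀ t : ℝ, 0 ≤ t → HasDerivAt Φ
      (fun i k => ∑ l, ((-(Matrix.diagonal (d (σ t))) + B (σ t)) i l) * Φ t l k) t) :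
    ∀ t : ℝ, 0 ≤ t → ∀ i, φ t i ≤ ∑ k, Φ t i k * y0 k :=
  stmt12_general n m σ d hd B hB x0 y0 hx0 hle φ hφ0 hφ Φ hΦ0 hΦ
end

section
/- Let A ∈ ℝⁿˣⁿ be a Metzler matrix with spectral abscissa μ(A) < 0. Then there exists a vector v ≫ 0 (strictly positive componentwise) with Av ≪ 0 (strictly negative componentwise). -/
/-!
For small `h > 0` the matrix `M = 1 + h • A` is entrywise nonnegative (because `A` is Metzler)
and its spectrum `1 + h • σ(A)` lies in the open unit disc (because `A` is Hurwitz). By Gelfand's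
formula the Neumann series `S = ∑ Mᵏ` then converges, `S ≥ 0` entrywise, and `M * S = S - 1`.
The vector `v = S *ᵥ 1` therefore satisfies `M *ᵥ v = v - 1`, which gives `v ≥ 1` and
`h • (A *ᵥ v) = -1`.
-/

open Filter Topology NNReal ENNReal Matrix

theorem summable_norm_pow_of_spectralRadius_lt_one {A : Type*} [NormedRing A]
    [NormedAlgebra ℂ A] [CompleteSpace A] {a : A} (ha : spectralRadius ℂ a < 1) :
    Summable (fun k => ‖a ^ k‖) := by
  obtain ⟨r, hρr, hr1⟩ := ENNReal.lt_iff_exists_nnreal_btwn.mp ha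
  have hr1' : (r : ℝ) < 1 := by exact_mod_cast hr1
  refine Summable.of_norm_bounded_eventually_nat (summable_geometric_of_lt_one r.2 hr1') ?_
  filter_upwards [(spectrum.pow_nnnorm_pow_one_div_tendsto_nhds_spectralRadius a).eventually
    (gt_mem_nhds hρr), eventually_gt_atTop 0] with k hk hk0
  rw [← ENNReal.coe_rpow_of_nonneg _ (by positivity), ENNReal.coe_lt_coe, one_div,
    NNReal.rpow_inv_lt_iff (by positivity), NNReal.rpow_natCast] at hk
  rw [norm_norm]
  exact_mod_cast hk.le

theorem spectralRadius_lt_of_finite {𝕜 A : Type*} [NormedField 𝕜] [Ring A] [Algebra 𝕜 A]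
    {a : A} (ha : (spectrum 𝕜 a).Finite) {r : ℝ≥0} (hr0 : 0 < r)
    (hr : ∀ k ∈ spectrum 𝕜 a, ‖k‖₊ < r) : spectralRadius 𝕜 a < r := by
  have : spectralRadius 𝕜 a = ha.toFinset.sup fun k => (‖k‖₊ : ℝ≥0∞) := by
    simp [spectralRadius, Finset.sup_eq_iSup]
  rw [this, Finset.sup_lt_iff (by simpa using hr0)]
  simpa using hr

theorem Complex.eventually_norm_one_add_mul_lt_one {z : ℂ} (hz : z.re < 0) :
    ∀ᶠ h : ℝ in 𝓝[>] 0, ‖1 + h * z‖ < 1 := by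
  have hlim : Tendsto (fun h : ℝ => 2 * z.re + h * ‖z‖ ^ 2) (𝓝 0) (𝓝 (2 * z.re)) :=
    Continuous.tendsto' (by fun_prop) 0 _ (by simp)
  filter_upwards [nhdsWithin_le_nhds (hlim.eventually (gt_mem_nhds (by linarith))),
    self_mem_nhdsWithin] with h hneg (hpos : 0 < h)
  have hsq : ‖1 + h * z‖ ^ 2 = 1 + h * (2 * z.re + h * ‖z‖ ^ 2) := by
    rw [← Complex.normSq_eq_norm_sq, ← Complex.normSq_eq_norm_sq, Complex.normSq_apply,
      Complex.normSq_apply]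
    simp only [Complex.add_re, Complex.one_re, Complex.mul_re, Complex.ofReal_re,
      Complex.ofReal_im, zero_mul, sub_zero, Complex.add_im, Complex.one_im, Complex.mul_im,
      add_zero, zero_add]
    ring
  have : ‖1 + h * z‖ ^ 2 < 1 ^ 2 := by nlinarith
  exact lt_of_pow_lt_pow_left₀ 2 zero_le_one this

namespace Matrix

section LinftyOpNorm

attribute [local instance] Matrix.linftyOpNormedAddCommGroup Matrix.linftyOpNormedRing
  Matrix.linftyOpNormedAlgebra

theorem linfty_opNorm_map_ofReal {m n : Type*} [Fintype m] [Fintype n] (M : Matrix m n ℝ) :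
    ‖M.map Complex.ofReal‖ = ‖M‖ := by
  simp [linfty_opNorm_def]

theorem summable_pow_of_spectralRadius_map_ofReal_lt_one {n : Type*} [Fintype n] [DecidableEq n]
    {M : Matrix n n ℝ}
    (hM : spectralRadius ℂ (M.map Complex.ofReal) < 1) : Summable (fun k => M ^ k) := by
  have hpow (k : ℕ) : (M ^ k).map Complex.ofReal = M.map Complex.ofReal ^ k :=
    map_pow Complex.ofRealHom.mapMatrix M k
  refine Summable.of_norm ?_
  simpa only [← linfty_opNorm_map_ofReal, hpow] using
    summable_norm_pow_of_spectralRadius_lt_one hM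

end LinftyOpNorm

variable {n : Type*} [Fintype n] [DecidableEq n]

theorem mem_spectrum_one_add_smul {B : Matrix n n ℂ} {h : ℂ} (hh : h ≠ 0) {k : ℂ}
    (hk : k ∈ spectrum ℂ (1 + h • B)) : ∃ z ∈ spectrum ℂ B, k = 1 + h * z := by
  have : (1 : Matrix n n ℂ) + h • B = algebraMap ℂ _ 1 + (Units.mk0 h hh) • B := by simp
  rw [this, ← spectrum.singleton_add_eq, spectrum.unit_smul_eq_smul, Set.singleton_add] at hk
  obtain ⟨_, ⟨z, hz, rfl⟩, rfl⟩ := hk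
  exact ⟨z, hz, by simp⟩

theorem eventually_spectralRadius_one_add_smul_lt_one {B : Matrix n n ℂ}
    (hB : ∀ z ∈ spectrum ℂ B, z.re < 0) :
    ∀ᶠ h : ℝ in 𝓝[>] 0, spectralRadius ℂ (1 + (h : ℂ) • B) < 1 := by
  filter_upwards [(B.finite_spectrum.eventually_all).mpr
    fun z hz => Complex.eventually_norm_one_add_mul_lt_one (hB z hz),
    self_mem_nhdsWithin] with h hnorm (hpos : 0 < h)
  refine spectralRadius_lt_of_finite (finite_spectrum _) one_pos fun k hk => ?_
  obtain ⟨z, hz, rfl⟩ := mem_spectrum_one_add_smul (by exact_mod_cast hpos.ne') hk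
  exact_mod_cast hnorm z hz

theorem eventually_nonneg_one_add_smul {A : Matrix n n ℝ}
    (hA : ∀ i j, i ≠ j → 0 ≤ A i j) :
    ∀ᶠ h : ℝ in 𝓝[>] 0, ∀ i j, 0 ≤ (1 + h • A) i j := by
  have hdiag : ∀ i, ∀ᶠ h : ℝ in 𝓝 0, 0 < 1 + h * A i i := fun i =>
    (Continuous.tendsto' (by fun_prop) 0 _ (by simp)).eventually (lt_mem_nhds one_pos)
  filter_upwards [nhdsWithin_le_nhds (eventually_all.mpr hdiag), self_mem_nhdsWithin]
    with h hdiag (hpos : 0 < h) i j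
  rcases eq_or_ne i j with rfl | hij
  · simpa using (hdiag i).le
  · simpa [one_apply_ne hij] using mul_nonneg hpos.le (hA i j hij)

theorem exists_pos_mulVec_lt_of_summable_pow {M : Matrix n n ℝ} (hM : ∀ i j, 0 ≤ M i j)
    (hsum : Summable (fun k => M ^ k)) :
    ∃ v : n → ℝ, (∀ i, 0 < v i) ∧ ∀ i, (M *ᵥ v) i < v i := by
  set S := ∑' k, M ^ k
  have hS : M * S = S - 1 := by
    refine (hsum.hasSum.mul_left M).unique ?_
    simpa [pow_succ'] using (hasSum_nat_add_iff' 1).mpr hsum.hasSum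
  have hS0 : ∀ i j, 0 ≤ S i j := fun i j =>
    (Pi.hasSum.mp (Pi.hasSum.mp hsum.hasSum i) j).nonneg fun k => pow_apply_nonneg hM k i j
  set v := S *ᵥ 1
  have hv : M *ᵥ v = v - 1 := by
    rw [mulVec_mulVec, hS, sub_mulVec, one_mulVec]
  have hv0 (j : n) : 0 ≤ v j :=
    Finset.sum_nonneg fun l _ => mul_nonneg (hS0 j l) zero_le_one
  have hMv0 (i : n) : 0 ≤ (M *ᵥ v) i :=
    Finset.sum_nonneg fun j _ => mul_nonneg (hM i j) (hv0 j)
  refine ⟨v, fun i => ?_, fun i => ?_⟩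
  · have hvi := congrFun hv i
    simp only [Pi.sub_apply, Pi.one_apply] at hvi
    linarith [hMv0 i]
  · simp [hv]

end Matrix

/-- A Hurwitz Metzler matrix admits a strictly positive vector
`v` with `Av ≪ 0`. -/
theorem stmt15 (n : ℕ) (A : Matrix (Fin n) (Fin n) ℝ)
    (hMetzler : ∀ i j, i ≠ j → 0 ≤ A i j)
    (hHurwitz : ∀ μ ∈ spectrum ℂ (A.map (Complex.ofReal)), μ.re < 0) :
    ∃ v : Fin n → ℝ, (∀ i, 0 < v i) ∧ ∀ i, A.mulVec v i < 0 := by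
  obtain ⟨h, hM, hρ, hpos⟩ := (eventually_nonneg_one_add_smul hMetzler |>.and <|
    eventually_spectralRadius_one_add_smul_lt_one hHurwitz |>.and self_mem_nhdsWithin).exists
  have hmap : (1 + h • A).map Complex.ofReal = 1 + (h : ℂ) • A.map Complex.ofReal := by
    ext i j
    by_cases hij : i = j <;> simp [one_apply, hij]
  rw [← hmap] at hρ
  obtain ⟨v, hv, hMv⟩ :=
    exists_pos_mulVec_lt_of_summable_pow hM (summable_pow_of_spectralRadius_map_ofReal_lt_one hρ)
  refine ⟨v, hv, fun i => ?_⟩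
  have hMvi := hMv i
  simp only [add_mulVec, one_mulVec, smul_mulVec, Pi.add_apply, Pi.smul_apply,
    smul_eq_mul] at hMvi
  exact neg_of_mul_neg_right (by linarith) hpos.le
end
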